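/- arXiv:2505.13719 — 2 statements merged into one kernel-verified Lean document; each statement's English description precedes it below -/
import Mathlib

section
/- Let G ∈ 𝕊ⁿ be symmetric, X ∈ Δⁿ, ε ≥ 0, and set θ = max{−λ_min(G), 0}. Then −G belongs to the ε-normal cone N^ε_{Δⁿ}(X) if and only if ⟨G, X⟩ + θ ≤ ε. -/
/-!
On the spectraplex, `U ↦ ⟨G, U⟩` attains its minimum `min (λ_min(G), 0) = -θ`. It is bounded
below because `G - λ_min(G) • 1 ⪰ 0` and the trace of a product of positive semidefinite matrices
is nonnegative; it is attained at `0` or at `u uᵀ` for a unit eigenvector `u` of `λ_min(G)`.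
Since `⟨-G, U - X⟩ = ⟨G, X⟩ - ⟨G, U⟩`, the `ε`-normal cone condition is `⟨G, X⟩ + θ ≤ ε`.
-/

open Matrix BigOperators Finset

/-- The spectraplex `Δⁿ = {X ∈ 𝕊ⁿ : Tr(X) ≤ 1, X ⪰ 0}`. -/
def spectraplex (n : ℕ) : Set (Matrix (Fin n) (Fin n) ℝ) :=
  {X | X.trace ≤ 1 ∧ X.PosSemidef}

namespace Matrix

variable {n : Type*} [Fintype n] [DecidableEq n]

open scoped MatrixOrder ComplexOrder in
theorem PosSemidef.trace_mul_nonneg {𝕜 : Type*} [RCLike 𝕜] {A B : Matrix n n 𝕜}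
    (hA : A.PosSemidef) (hB : B.PosSemidef) : 0 ≤ (A * B).trace := by
  have hsqrt : (CFC.sqrt A)ᴴ = CFC.sqrt A := (CFC.sqrt_nonneg A).posSemidef.isHermitian
  have hconj : (CFC.sqrt A * B * CFC.sqrt A).PosSemidef := by
    simpa only [hsqrt] using hB.mul_mul_conjTranspose_same (CFC.sqrt A)
  calc 0 ≤ (CFC.sqrt A * B * CFC.sqrt A).trace := hconj.trace_nonneg
    _ = (A * B).trace := by rw [trace_mul_cycle, CFC.sqrt_mul_sqrt_self A hA.nonneg]

open scoped MatrixOrder ComplexOrder in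
theorem IsHermitian.posSemidef_sub_iInf_eigenvalues_smul_one {G : Matrix n n ℝ}
    (hG : G.IsHermitian) : (G - (⨅ i, hG.eigenvalues i) • 1).PosSemidef := by
  rw [← Algebra.algebraMap_eq_smul_one, ← le_iff,
    algebraMap_le_iff_le_spectrum (ha := hG.isSelfAdjoint), hG.spectrum_real_eq_range_eigenvalues]
  rintro _ ⟨i, rfl⟩
  exact ciInf_le (Set.finite_range _).bddBelow i

theorem IsHermitian.iInf_eigenvalues_mul_trace_le {G U : Matrix n n ℝ} (hG : G.IsHermitian)
    (hU : U.PosSemidef) : (⨅ i, hG.eigenvalues i) * U.trace ≤ (G * U).trace := by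
  have := hG.posSemidef_sub_iInf_eigenvalues_smul_one.trace_mul_nonneg hU
  rwa [sub_mul, trace_sub, smul_mul, one_mul, trace_smul, smul_eq_mul, sub_nonneg] at this

theorem IsHermitian.dotProduct_eigenvectorBasis_self {G : Matrix n n ℝ} (hG : G.IsHermitian)
    (i : n) : ⇑(hG.eigenvectorBasis i) ⬝ᵥ ⇑(hG.eigenvectorBasis i) = 1 := by
  have h := hG.eigenvectorBasis.inner_eq_one i
  rwa [EuclideanSpace.inner_eq_star_dotProduct, star_trivial] at h

theorem IsHermitian.trace_vecMulVec_eigenvectorBasis {G : Matrix n n ℝ} (hG : G.IsHermitian)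
    (i : n) : (vecMulVec (hG.eigenvectorBasis i) (hG.eigenvectorBasis i)).trace = 1 := by
  rw [trace_vecMulVec, hG.dotProduct_eigenvectorBasis_self]

theorem IsHermitian.trace_mul_vecMulVec_eigenvectorBasis {G : Matrix n n ℝ} (hG : G.IsHermitian)
    (i : n) : (G * vecMulVec (hG.eigenvectorBasis i) (hG.eigenvectorBasis i)).trace =
      hG.eigenvalues i := by
  rw [mul_vecMulVec, trace_vecMulVec, hG.mulVec_eigenvectorBasis, smul_dotProduct,
    hG.dotProduct_eigenvectorBasis_self, smul_eq_mul, mul_one]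

end Matrix

section Spectraplex

variable {n : ℕ} {G : Matrix (Fin n) (Fin n) ℝ}

theorem min_iInf_eigenvalues_le_trace_mul (hG : G.IsHermitian) {U : Matrix (Fin n) (Fin n) ℝ}
    (hU : U ∈ spectraplex n) : min (⨅ i, hG.eigenvalues i) 0 ≤ (G * U).trace := by
  calc min (⨅ i, hG.eigenvalues i) 0
      ≤ min (⨅ i, hG.eigenvalues i) 0 * U.trace := by
        simpa using mul_le_mul_of_nonpos_left hU.1 (min_le_right _ 0)
    _ ≤ (⨅ i, hG.eigenvalues i) * U.trace :=
        mul_le_mul_of_nonneg_right (min_le_left _ 0) hU.2.trace_nonneg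
    _ ≤ (G * U).trace := hG.iInf_eigenvalues_mul_trace_le hU.2

theorem exists_mem_spectraplex_trace_mul_eq_min (hn : 0 < n) (hG : G.IsHermitian) :
    ∃ U ∈ spectraplex n, (G * U).trace = min (⨅ i, hG.eigenvalues i) 0 := by
  have := Fin.pos_iff_nonempty.mp hn
  obtain ⟨i, hi⟩ := exists_eq_ciInf_of_finite (f := hG.eigenvalues)
  rcases le_total (⨅ i, hG.eigenvalues i) 0 with hneg | hnonneg
  · refine ⟨vecMulVec (hG.eigenvectorBasis i) (hG.eigenvectorBasis i),
      ⟨(hG.trace_vecMulVec_eigenvectorBasis i).le, ?_⟩, ?_⟩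
    · simpa using posSemidef_vecMulVec_self_star (R := ℝ) (hG.eigenvectorBasis i)
    · rw [hG.trace_mul_vecMulVec_eigenvectorBasis, hi, min_eq_left hneg]
  · exact ⟨0, ⟨by simp, .zero⟩, by simp [min_eq_right hnonneg]⟩

end Spectraplex

theorem neg_grad_in_eps_normal_cone_iff_general
    (n : ℕ) (hn : 0 < n)
    (G : Matrix (Fin n) (Fin n) ℝ) (hG : G.IsHermitian)
    (X : Matrix (Fin n) (Fin n) ℝ)
    (ε : ℝ)
    (θ : ℝ) (hθ : θ = max (-(⨅ i, hG.eigenvalues i)) 0) :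
    (∀ U ∈ spectraplex n, ((-G) * (U - X)).trace ≤ ε) ↔ (G * X).trace + θ ≤ ε := by
  have hθ_eq : θ = -min (⨅ i, hG.eigenvalues i) 0 := by rw [hθ, ← max_neg_neg, neg_zero]
  have htrace : ∀ U, ((-G) * (U - X)).trace = (G * X).trace - (G * U).trace := fun U => by
    rw [neg_mul, trace_neg, mul_sub, trace_sub, neg_sub]
  constructor
  · intro h
    obtain ⟨U, hU, hGU⟩ := exists_mem_spectraplex_trace_mul_eq_min hn hG
    have := h U hU
    rw [htrace, hGU] at this
    linarith
  · intro h U hU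
    have := min_iInf_eigenvalues_le_trace_mul hG hU
    rw [htrace]
    linarith

/-- Let `G ∈ 𝕊ⁿ`, `X ∈ Δⁿ`, `ε ≥ 0`, `θ = max{−λ_min(G), 0}`. Then
`−G ∈ N^ε_{Δⁿ}(X)` (i.e. `⟨−G, U − X⟩ ≤ ε` for all `U ∈ Δⁿ`, where `⟨A,B⟩ = Tr(AB)`)
if and only if `⟨G,X⟩ + θ ≤ ε`. -/
theorem neg_grad_in_eps_normal_cone_iff
    (n : ℕ) (hn : 0 < n)
    (G : Matrix (Fin n) (Fin n) ℝ) (hG : G.IsHermitian)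
    (X : Matrix (Fin n) (Fin n) ℝ) (hX : X ∈ spectraplex n)
    (ε : ℝ) (hε : 0 ≤ ε)
    (θ : ℝ) (hθ : θ = max (-(⨅ i, hG.eigenvalues i)) 0) :
    (∀ U ∈ spectraplex n, ((-G) * (U - X)).trace ≤ ε) ↔ (G * X).trace + θ ≤ ε :=
  neg_grad_in_eps_normal_cone_iff_general n hn G hG X ε θ hθ
end

section
/- Approximate weak duality with primal infeasibility: let A₁,…,A_m ∈ 𝕊ⁿ be symmetric, C ∈ 𝕊ⁿ and b ∈ ℝ^m. If X ∈ Δⁿ (not necessarily satisfying 𝒜(X) = b) and (p, θ) ∈ ℝ^m × ℝ satisfies C + 𝒜*(p) + θI ⪰ 0 and θ ≥ 0, then ⟨C, X⟩ − (−bᵀp − θ) ≥ ⟨p, b − 𝒜(X)⟩ ≥ −‖p‖·‖𝒜(X) − b‖. -/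
open Matrix BigOperators Finset

/-!
Pairing the dual slack matrix `S = C + 𝒜*(p) + θI ⪰ 0` with `X ⪰ 0` gives `⟨S, X⟩ ≥ 0`, and
`⟨S, X⟩ = ⟨C, X⟩ + ⟨p, 𝒜(X)⟩ + θ Tr X ≤ ⟨C, X⟩ + ⟨p, 𝒜(X)⟩ + θ` since `θ ≥ 0` and `Tr X ≤ 1`.
Rearranging is the first inequality; the second is Cauchy–Schwarz.
-/

namespace Matrix

open scoped ComplexOrder

variable {n : Type*} [Fintype n]

theorem PosSemidef.trace_mul_nonneg_s8 {𝕜 : Type*} [RCLike 𝕜] {M X : Matrix n n 𝕜}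
    (hM : M.PosSemidef) (hX : X.PosSemidef) : 0 ≤ (M * X).trace := by
  classical
  open scoped MatrixOrder in
  obtain ⟨S, hS, hSS⟩ : ∃ S : Matrix n n 𝕜, Sᴴ = S ∧ S * S = X :=
    ⟨CFC.sqrt X, (CFC.sqrt_nonneg X).isSelfAdjoint.star_eq,
      CFC.sqrt_mul_sqrt_self X (nonneg_iff_posSemidef.mpr hX)⟩
  have hcycle : (M * X).trace = (S * M * Sᴴ).trace := by
    rw [hS, ← hSS, ← Matrix.mul_assoc, trace_mul_cycle]
  exact hcycle ▸ (hM.mul_mul_conjTranspose_same S).trace_nonneg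

theorem trace_sum_smul_mul {ι R : Type*} [Fintype ι] [CommSemiring R]
    (p : ι → R) (A : ι → Matrix n n R) (X : Matrix n n R) :
    ((∑ i, p i • A i) * X).trace = ∑ i, p i * (A i * X).trace := by
  simp only [Finset.sum_mul, trace_sum, smul_mul, trace_smul, smul_eq_mul]

end Matrix

theorem approximate_weak_duality_general
    (n m : ℕ)
    (A : Fin m → Matrix (Fin n) (Fin n) ℝ)
    (C : Matrix (Fin n) (Fin n) ℝ)
    (b : Fin m → ℝ)
    (X : Matrix (Fin n) (Fin n) ℝ) (hX : X ∈ spectraplex n)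
    (p : Fin m → ℝ) (θ : ℝ) (hθ : 0 ≤ θ)
    (hdual : (C + (∑ i, p i • A i) + θ • (1 : Matrix (Fin n) (Fin n) ℝ)).PosSemidef) :
    (C * X).trace - (-(∑ i, b i * p i) - θ) ≥ ∑ i, p i * (b i - (A i * X).trace) ∧
    ∑ i, p i * (b i - (A i * X).trace) ≥
      -(Real.sqrt (∑ i, p i ^ 2) * Real.sqrt (∑ i, ((A i * X).trace - b i) ^ 2)) := by
  obtain ⟨htr, hXpsd⟩ := hX
  have hslack := hdual.trace_mul_nonneg_s8 hXpsd
  rw [add_mul, add_mul, trace_add, trace_add, trace_sum_smul_mul, smul_mul, one_mul,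
    trace_smul, smul_eq_mul] at hslack
  have hθtr : θ * X.trace ≤ θ := mul_le_of_le_one_right hθ htr
  constructor
  · have hbp : ∑ i, p i * (b i - (A i * X).trace) =
        ∑ i, b i * p i - ∑ i, p i * (A i * X).trace := by
      rw [← sum_sub_distrib]
      exact sum_congr rfl fun i _ ↦ by ring
    linarith
  · have hpairing : ∑ i, p i * (b i - (A i * X).trace) =
        -∑ i, p i * ((A i * X).trace - b i) := by
      rw [← sum_neg_distrib]
      exact sum_congr rfl fun i _ ↦ by ring
    rw [hpairing]
    exact neg_le_neg (Real.sum_mul_le_sqrt_mul_sqrt _ _ _)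

/-- **approximate weak duality.** If `X ∈ Δⁿ` (not necessarily with
`𝒜(X) = b`) and `(p, θ)` satisfies `C + 𝒜*(p) + θI ⪰ 0` and `θ ≥ 0`, then
`⟨C,X⟩ − (−bᵀp − θ) ≥ ⟨p, b − 𝒜(X)⟩ ≥ −‖p‖ ‖𝒜(X) − b‖`. -/
theorem approximate_weak_duality
    (n m : ℕ)
    (A : Fin m → Matrix (Fin n) (Fin n) ℝ) (hA : ∀ i, (A i).IsSymm)
    (C : Matrix (Fin n) (Fin n) ℝ) (hC : C.IsSymm)
    (b : Fin m → ℝ)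
    (X : Matrix (Fin n) (Fin n) ℝ) (hX : X ∈ spectraplex n)
    (p : Fin m → ℝ) (θ : ℝ) (hθ : 0 ≤ θ)
    (hdual : (C + (∑ i, p i • A i) + θ • (1 : Matrix (Fin n) (Fin n) ℝ)).PosSemidef) :
    (C * X).trace - (-(∑ i, b i * p i) - θ) ≥ ∑ i, p i * (b i - (A i * X).trace) ∧
    ∑ i, p i * (b i - (A i * X).trace) ≥
      -(Real.sqrt (∑ i, p i ^ 2) * Real.sqrt (∑ i, ((A i * X).trace - b i) ^ 2)) :=
  approximate_weak_duality_general n m A C b X hX p θ hθ hdual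
end
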